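/- arXiv:1001.5089 — 2 statements merged into one kernel-verified Lean document; each statement's English description precedes it below -/
import Mathlib

section
/- In the planar widely-spaced case, for any σ > 0 there exist constants δ, k > 0 such that for every x₀ = (x₀₁, x₀₂) with ‖x₀‖ < δ and every solution x = (x₁, x₂) with x(0) = x₀, the second component satisfies |x₂(t)| ≤ k · exp((αa + σ)t) · ‖x₀‖ for all t ≥ 0. -/
open MeasureTheory Set

/-- The point `(u, v)` of the Euclidean plane. -/
noncomputable def ePair (u v : ℝ) : EuclideanSpace ℝ (Fin 2) :=
  (WithLp.equiv 2 (Fin 2 → ℝ)).symm ![u, v]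

/-- `x : [0,∞) → ℝ²` is a solution of `ẋ = A x + b(x)` with `A = diag(a, κa)`. -/
def IsSolutionP (a κ : ℝ) (b : EuclideanSpace ℝ (Fin 2) → EuclideanSpace ℝ (Fin 2))
    (x : ℝ → EuclideanSpace ℝ (Fin 2)) : Prop :=
  ∀ t : ℝ, 0 ≤ t →
    HasDerivWithinAt x
      (ePair (a * x t 0 + b (x t) 0) (κ * a * x t 1 + b (x t) 1)) (Ici 0) t
/-!
Since `κ ≥ 1` and `a < 0`, the vector field satisfies `⟪u, A u + b u⟫ ≤ (a + ε)‖u‖²` on any ball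
where `‖b u‖ ≤ ε‖u‖`, and `‖b u‖ ≤ K₁‖u‖^α` makes this hold on a small ball. Grönwall's inequality
for `‖x‖²`, together with a continuity argument keeping the solution in that ball, gives
`‖x t‖ ≤ ‖x₀‖ e^{(a+ε)t}`. The second component solves `x₂' = κa x₂ + b₂(x)` with forcing of size
`ε‖x₀‖ e^{α(a+ε)t}`, so variation of constants yields
`|x₂ t| ≤ e^{κat} |x₂ 0| + ε‖x₀‖ t e^{α(a+ε)t}`; with `κ ≥ α` and `αε ≤ σ/2` both terms are
absorbed into `e^{(αa+σ)t}`.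
-/
open Real Filter Topology

local notation "ℝ²" => EuclideanSpace ℝ (Fin 2)

theorem exists_pos_le_mul_rpow_le {δ₀ K ε α : ℝ} (hδ₀ : 0 < δ₀) (hε : 0 < ε) (hα : 1 < α) :
    ∃ δ, 0 < δ ∧ δ ≤ δ₀ ∧ K * δ ^ (α - 1) ≤ ε := by
  have hlim : Tendsto (fun δ : ℝ => K * δ ^ (α - 1)) (𝓝[>] 0) (𝓝 0) := by
    have hcont : Continuous fun δ : ℝ => K * δ ^ (α - 1) :=
      continuous_const.mul (continuous_rpow_const (by linarith))
    simpa [zero_rpow (by linarith : α - 1 ≠ 0)] using (hcont.tendsto 0).mono_left nhdsWithin_le_nhds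
  obtain ⟨δ, hKδ, hδ, hδδ₀⟩ := ((hlim.eventually (ge_mem_nhds hε)).and
    (Ioc_mem_nhdsGT hδ₀)).exists
  exact ⟨δ, hδ, hδδ₀, hKδ⟩

theorem mul_rpow_le_of_le {K α δ ε r : ℝ} (hK : 0 ≤ K) (hα : 1 ≤ α) (hr : 0 ≤ r) (hrδ : r ≤ δ)
    (hKδ : K * δ ^ (α - 1) ≤ ε) : K * r ^ α ≤ ε * r := by
  have hsplit : r ^ α = r ^ (α - 1) * r := by
    simpa using rpow_add' hr (by linarith : α - 1 + 1 ≠ 0)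
  calc K * r ^ α = K * r ^ (α - 1) * r := by rw [hsplit, mul_assoc]
    _ ≤ K * δ ^ (α - 1) * r := by gcongr
    _ ≤ ε * r := by gcongr

theorem mul_rpow_le_mul_exp_of_le {K α δ ε r y c : ℝ} (hK : 0 ≤ K) (hα : 1 ≤ α) (hy : 0 ≤ y)
    (hr : 0 ≤ r) (hrδ : r ≤ δ) (hKδ : K * δ ^ (α - 1) ≤ ε) (hyr : y ≤ r * exp c) :
    K * y ^ α ≤ ε * r * exp (α * c) :=
  calc K * y ^ α ≤ K * (r * exp c) ^ α := by gcongr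
    _ = K * r ^ α * exp (α * c) := by
        rw [mul_rpow hr (exp_pos _).le, ← exp_mul, mul_comm c, mul_assoc]
    _ ≤ ε * r * exp (α * c) :=
        mul_le_mul_of_nonneg_right (mul_rpow_le_of_le hK hα hr hrδ hKδ) (exp_pos _).le

theorem mul_exp_le_inv_mul_exp {s p q t : ℝ} (hs : 0 < s) (ht : 0 ≤ t) (hpq : p + s ≤ q) :
    t * exp (p * t) ≤ s⁻¹ * exp (q * t) := by
  have ht_le : t ≤ s⁻¹ * exp (s * t) := by
    rw [le_inv_mul_iff₀ hs]
    linarith [add_one_le_exp (s * t)]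
  calc t * exp (p * t) ≤ s⁻¹ * exp (s * t) * exp (p * t) := by gcongr
    _ = s⁻¹ * exp ((p + s) * t) := by rw [mul_assoc, ← exp_add]; ring_nf
    _ ≤ s⁻¹ * exp (q * t) := by gcongr

theorem ContinuousOn.lt_of_forall_Ico_lt {f : ℝ → ℝ} {a δ t : ℝ} (hf : ContinuousOn f (Ici a))
    (hstep : ∀ T, a ≤ T → (∀ s ∈ Ico a T, f s < δ) → f T < δ) (ht : a ≤ t) : f t < δ := by
  by_contra! hft
  set B := {s ∈ Ici a | δ ≤ f s}
  have hB : IsClosed B := hf.preimage_isClosed_of_isClosed isClosed_Ici isClosed_Ici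
  have hBdd : BddBelow B := ⟨a, fun s hs => hs.1⟩
  have hT : sInf B ∈ B := hB.csInf_mem ⟨t, ht, hft⟩ hBdd
  refine (hstep _ hT.1 fun s hs => ?_).not_ge hT.2
  by_contra! hfs
  exact (csInf_le hBdd ⟨hs.1, hfs⟩).not_gt hs.2

theorem norm_le_mul_exp_of_inner_le {E : Type*} [NormedAddCommGroup E] [InnerProductSpace ℝ E]
    {x v : ℝ → E} {c a T t : ℝ} (hx : ContinuousOn x (Icc a T))
    (hv : ∀ s ∈ Ico a T, HasDerivWithinAt x (v s) (Ici s) s)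
    (hc : ∀ s ∈ Ico a T, inner ℝ (x s) (v s) ≤ c * ‖x s‖ ^ 2) (ht : t ∈ Icc a T) :
    ‖x t‖ ≤ ‖x a‖ * exp (c * (t - a)) := by
  have hsq := le_gronwallBound_of_liminf_deriv_right_le (f := fun s => ‖x s‖ ^ 2)
    (f' := fun s => 2 * inner ℝ (x s) (v s)) (ε := 0) (K := 2 * c) (hx.norm.pow 2)
    (fun s hs r hr => (hv s hs).norm_sq.liminf_right_slope_le hr) le_rfl
    (fun s hs => by linarith [hc s hs]) t ht
  rw [gronwallBound_ε0] at hsq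
  have hexp : ‖x a‖ ^ 2 * exp (2 * c * (t - a)) = (‖x a‖ * exp (c * (t - a))) ^ 2 := by
    rw [mul_pow, ← exp_nat_mul]; ring_nf
  rw [hexp] at hsq
  exact (pow_le_pow_iff_left₀ (norm_nonneg _) (by positivity) two_ne_zero).1 hsq

theorem abs_le_of_hasDerivWithinAt_linear {y g : ℝ → ℝ} {c ν M t : ℝ} (ht : 0 ≤ t) (hcν : c ≤ ν)
    (hy : ∀ s ∈ Icc 0 t, HasDerivWithinAt y (c * y s + g s) (Icc 0 t) s)
    (hg : ∀ s ∈ Icc 0 t, |g s| ≤ M * exp (ν * s)) :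
    |y t| ≤ exp (c * t) * |y 0| + M * t * exp (ν * t) := by
  have hM : 0 ≤ M := by simpa using (abs_nonneg _).trans (hg 0 ⟨le_rfl, ht⟩)
  set z := fun s => exp (-c * s) * y s
  have hz : ∀ s ∈ Icc 0 t, HasDerivWithinAt z (exp (-c * s) * g s) (Icc 0 t) s := by
    intro s hs
    refine ((((hasDerivAt_id s).const_mul (-c)).exp.hasDerivWithinAt).mul (hy s hs)).congr_deriv ?_
    simp only [id]
    ring
  have hz' : ∀ s ∈ Icc 0 t, ‖exp (-c * s) * g s‖ ≤ M * exp ((ν - c) * t) := by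
    intro s hs
    calc ‖exp (-c * s) * g s‖ = exp (-c * s) * |g s| := by
          rw [norm_mul, norm_of_nonneg (exp_pos _).le, norm_eq_abs]
      _ ≤ exp (-c * s) * (M * exp (ν * s)) := by gcongr; exact hg s hs
      _ = M * exp ((ν - c) * s) := by rw [mul_left_comm, ← exp_add]; ring_nf
      _ ≤ M * exp ((ν - c) * t) := by
          gcongr
          exact hs.2
  have hmvt := (convex_Icc 0 t).norm_image_sub_le_of_norm_hasDerivWithin_le hz hz'
    ⟨le_rfl, ht⟩ ⟨ht, le_rfl⟩
  simp only [norm_eq_abs, sub_zero, abs_of_nonneg ht] at hmvt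
  have hyz : y t = exp (c * t) * z t := by
    rw [← mul_assoc, ← exp_add, show c * t + -c * t = 0 by ring, exp_zero, one_mul]
  calc |y t| = exp (c * t) * |z t| := by rw [hyz, abs_mul, abs_of_pos (exp_pos _)]
    _ ≤ exp (c * t) * (|z 0| + M * exp ((ν - c) * t) * t) := by
        gcongr; linarith [abs_sub_abs_le_abs_sub (z t) (z 0)]
    _ = exp (c * t) * |y 0| + M * t * exp (ν * t) := by
        simp only [z, mul_zero, exp_zero, one_mul]
        rw [show ν * t = (ν - c) * t + c * t by ring, exp_add]; ring

noncomputable def diagField (a κ : ℝ) (b : ℝ² → ℝ²) (u : ℝ²) : ℝ² :=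
  ePair (a * u 0 + b u 0) (κ * a * u 1 + b u 1)

theorem inner_diagField_le {a κ ε : ℝ} {b : ℝ² → ℝ²} {u : ℝ²} (ha : a ≤ 0) (hκ : 1 ≤ κ)
    (hbu : ‖b u‖ ≤ ε * ‖u‖) : inner ℝ u (diagField a κ b u) ≤ (a + ε) * ‖u‖ ^ 2 := by
  have hnorm : ‖u‖ ^ 2 = u 0 ^ 2 + u 1 ^ 2 := by
    rw [EuclideanSpace.real_norm_sq_eq, Fin.sum_univ_two]
  have hinner :
      inner ℝ u (diagField a κ b u) = a * u 0 ^ 2 + κ * a * u 1 ^ 2 + inner ℝ u (b u) := by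
    simp only [diagField, ePair, PiLp.inner_apply, Fin.sum_univ_two, WithLp.equiv_symm_apply,
      Matrix.cons_val_zero, Matrix.cons_val_one, Matrix.cons_val_fin_one, RCLike.inner_apply,
      conj_trivial]
    ring
  have hb : inner ℝ u (b u) ≤ ε * ‖u‖ ^ 2 := by
    calc inner ℝ u (b u) ≤ ‖u‖ * ‖b u‖ := real_inner_le_norm _ _
      _ ≤ ‖u‖ * (ε * ‖u‖) := by gcongr
      _ = ε * ‖u‖ ^ 2 := by ring
  have hκa : κ * a * u 1 ^ 2 ≤ a * u 1 ^ 2 :=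
    mul_le_mul_of_nonneg_right (by nlinarith) (sq_nonneg _)
  rw [hinner]
  nlinarith

namespace IsSolutionP

variable {a κ : ℝ} {b : ℝ² → ℝ²} {x : ℝ → ℝ²}

theorem continuousOn (hx : IsSolutionP a κ b x) : ContinuousOn x (Ici 0) :=
  fun t ht => (hx t ht).continuousWithinAt

theorem hasDerivWithinAt_apply_one (hx : IsSolutionP a κ b x) {t : ℝ} (ht : 0 ≤ t) :
    HasDerivWithinAt (fun s => x s 1) (κ * a * x t 1 + b (x t) 1) (Ici 0) t :=
  (EuclideanSpace.proj 1 : ℝ² →L[ℝ] ℝ).hasFDerivAt.comp_hasDerivWithinAt t (hx t ht)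

theorem norm_lt_and_le_exp {ε δ : ℝ} (hx : IsSolutionP a κ b x) (ha : a ≤ 0) (hκ : 1 ≤ κ)
    (haε : a + ε ≤ 0) (hb : ∀ y, ‖y‖ < δ → ‖b y‖ ≤ ε * ‖y‖) (hx0 : ‖x 0‖ < δ) {t : ℝ}
    (ht : 0 ≤ t) : ‖x t‖ < δ ∧ ‖x t‖ ≤ ‖x 0‖ * exp ((a + ε) * t) := by
  have hdecay : ∀ T, (∀ s ∈ Ico 0 T, ‖x s‖ < δ) →
      ∀ t ∈ Icc 0 T, ‖x t‖ ≤ ‖x 0‖ * exp ((a + ε) * t) := by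
    intro T hsmall t ht
    simpa using norm_le_mul_exp_of_inner_le (hx.continuousOn.mono Icc_subset_Ici_self)
      (fun s hs => (hx s hs.1).mono (Ici_subset_Ici.2 hs.1))
      (fun s hs => inner_diagField_le ha hκ (hb _ (hsmall s hs))) ht
  have hsmall : ∀ t, 0 ≤ t → ‖x t‖ < δ := by
    refine fun t ht => hx.continuousOn.norm.lt_of_forall_Ico_lt (fun T hT hlt => ?_) ht
    have hexp : exp ((a + ε) * T) ≤ 1 := exp_le_one_iff.2 (mul_nonpos_of_nonpos_of_nonneg haε hT)
    calc ‖x T‖ ≤ ‖x 0‖ * exp ((a + ε) * T) := hdecay T hlt T ⟨hT, le_rfl⟩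
      _ ≤ ‖x 0‖ := mul_le_of_le_one_right (norm_nonneg _) hexp
      _ < δ := hx0
  exact ⟨hsmall t ht, hdecay t (fun s hs => hsmall s hs.1) t ⟨ht, le_rfl⟩⟩

end IsSolutionP

theorem stmt13_general (a κ : ℝ) (ha : a < 0) (hκ1 : 1 ≤ κ)
    (b : EuclideanSpace ℝ (Fin 2) → EuclideanSpace ℝ (Fin 2))
    (δ₀ K₁ α : ℝ) (hδ₀ : 0 < δ₀) (hK₁ : 0 < K₁)
    (hα : 1 < α)
    (hbnd : ∀ y : EuclideanSpace ℝ (Fin 2), ‖y‖ < δ₀ → ‖b y‖ ≤ K₁ * ‖y‖ ^ α)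
    (hκα : α ≤ κ)
    (σ : ℝ) (hσ : 0 < σ) :
    ∃ δ > 0, ∃ k > 0, ∀ x₀ : EuclideanSpace ℝ (Fin 2), ‖x₀‖ < δ →
      ∀ x : ℝ → EuclideanSpace ℝ (Fin 2), IsSolutionP a κ b x → x 0 = x₀ →
        ∀ t : ℝ, 0 ≤ t →
          |x t 1| ≤ k * Real.exp ((α * a + σ) * t) * ‖x₀‖ := by
  obtain ⟨ε, hε, haε, hαε⟩ : ∃ ε > 0, a + ε ≤ 0 ∧ α * ε ≤ σ / 2 := by
    refine ⟨min (σ / (2 * α)) (-a), lt_min (by positivity) (by linarith),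
      by linarith [min_le_right (σ / (2 * α)) (-a)], ?_⟩
    calc α * min (σ / (2 * α)) (-a) ≤ α * (σ / (2 * α)) := by gcongr; exact min_le_left _ _
      _ = σ / 2 := by field_simp
  obtain ⟨δ, hδ, hδδ₀, hKδ⟩ := exists_pos_le_mul_rpow_le (K := K₁) hδ₀ hε hα
  refine ⟨δ, hδ, 1 + ε * (σ / 2)⁻¹, by positivity, ?_⟩
  rintro _ hx₀ x hx rfl t ht
  have hdecay := fun s (hs : 0 ≤ s) => hx.norm_lt_and_le_exp ha.le hκ1 haε
    (fun y hy => (hbnd y (hy.trans_le hδδ₀)).trans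
      (mul_rpow_le_of_le hK₁.le hα.le (norm_nonneg y) hy.le hKδ)) hx₀ hs
  have hb_decay : ∀ s ∈ Icc 0 t, |b (x s) 1| ≤ ε * ‖x 0‖ * exp (α * (a + ε) * s) := by
    intro s hs
    rw [mul_assoc α]
    exact (PiLp.norm_apply_le _ 1).trans <| (hbnd _ ((hdecay s hs.1).1.trans_le hδδ₀)).trans <|
      mul_rpow_le_mul_exp_of_le hK₁.le hα.le (norm_nonneg _) (norm_nonneg _) hx₀.le hKδ
        (hdecay s hs.1).2
  have hsnd := abs_le_of_hasDerivWithinAt_linear ht (by nlinarith)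
    (fun s hs => (hx.hasDerivWithinAt_apply_one hs.1).mono Icc_subset_Ici_self) hb_decay
  have hlin : exp (κ * a * t) ≤ exp ((α * a + σ) * t) := by gcongr; nlinarith
  have hnonlin : t * exp (α * (a + ε) * t) ≤ (σ / 2)⁻¹ * exp ((α * a + σ) * t) :=
    mul_exp_le_inv_mul_exp (by positivity) ht (by nlinarith)
  calc |x t 1| ≤ exp (κ * a * t) * |x 0 1| + ε * ‖x 0‖ * t * exp (α * (a + ε) * t) := hsnd
    _ ≤ exp ((α * a + σ) * t) * ‖x 0‖ + ε * ‖x 0‖ * ((σ / 2)⁻¹ * exp ((α * a + σ) * t)) := by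
        rw [mul_assoc (ε * _)]
        gcongr ?_ * ?_ + _ * ?_
        exact PiLp.norm_apply_le (x 0) 1
    _ = (1 + ε * (σ / 2)⁻¹) * exp ((α * a + σ) * t) * ‖x 0‖ := by ring

/-- Planar widely-spaced case (`A = diag(a, κa)`, `a < 0`,
`κ ≥ α`): for any `σ > 0` there are `δ, k > 0` such that any solution `x` with
`‖x(0)‖ < δ` has second component satisfying
`|x₂(t)| ≤ k · exp((αa + σ)t) · ‖x₀‖` for all `t ≥ 0`. -/
theorem stmt13 (a κ : ℝ) (ha : a < 0) (hκ1 : 1 ≤ κ)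
    (b : EuclideanSpace ℝ (Fin 2) → EuclideanSpace ℝ (Fin 2))
    (hb : ContDiff ℝ 1 b)
    (δ₀ K₁ K₂ α β : ℝ) (hδ₀ : 0 < δ₀) (hK₁ : 0 < K₁) (hK₂ : 0 < K₂)
    (hα : 1 < α) (hβ : 0 < β)
    (hbnd : ∀ y : EuclideanSpace ℝ (Fin 2), ‖y‖ < δ₀ → ‖b y‖ ≤ K₁ * ‖y‖ ^ α)
    (hDbnd : ∀ y : EuclideanSpace ℝ (Fin 2), ‖y‖ < δ₀ → ‖fderiv ℝ b y‖ ≤ K₂ * ‖y‖ ^ β)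
    (hκα : α ≤ κ)
    (σ : ℝ) (hσ : 0 < σ) :
    ∃ δ > 0, ∃ k > 0, ∀ x₀ : EuclideanSpace ℝ (Fin 2), ‖x₀‖ < δ →
      ∀ x : ℝ → EuclideanSpace ℝ (Fin 2), IsSolutionP a κ b x → x 0 = x₀ →
        ∀ t : ℝ, 0 ≤ t →
          |x t 1| ≤ k * Real.exp ((α * a + σ) * t) * ‖x₀‖ :=
  stmt13_general a κ ha hκ1 b δ₀ K₁ α hδ₀ hK₁ hα hbnd hκα σ hσ
end

section
/- Let ε > 0 and 0 < η < 1, and define λ₊ := (−(ε+1) + √((ε+1)² − 4εη))/(2ε) and λ₋ := (−(ε+1) − √((ε+1)² − 4εη))/(2ε). Then (ε+1)² − 4εη > 0, the strict inequalities λ₋ < −1 < −η < λ₊ < 0 hold, and the ratio κ := λ₋/λ₊ satisfies κ > max(ε, ε⁻¹) ≥ 1. -/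
/-!
The eigenvalues `λ₋ < λ₊` are the roots of `p(λ) = ε λ² + (ε + 1) λ + η`, an upward parabola.
Since `p(-1) = p(-ε⁻¹) = η - 1 < 0` and `p(-η) = ε η (η - 1) < 0`, the points `-1`, `-ε⁻¹` and `-η`
lie strictly between the roots; and `λ₊ < 0` because `4εη > 0` makes the square root smaller than `ε + 1`.
With `λ₋ + λ₊ = -(1 + ε⁻¹)` one gets `ε λ₊ - λ₋ = (1 + ε)(λ₊ + ε⁻¹) > 0` and
`ε⁻¹ λ₊ - λ₋ = (1 + ε⁻¹)(λ₊ + 1) > 0`, which is `κ > ε` and `κ > ε⁻¹` after dividing by `λ₊ < 0`.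
-/

section Quadratic

variable {a b c : ℝ}

theorem sq_add_lt_discrim_of_quadratic_neg (ha : 0 < a) {x : ℝ}
    (hx : a * (x * x) + b * x + c < 0) : (2 * a * x + b) ^ 2 < discrim a b c := by
  have h : discrim a b c - (2 * a * x + b) ^ 2 = -(4 * a) * (a * (x * x) + b * x + c) := by
    rw [discrim]; ring
  nlinarith

theorem discrim_pos_of_quadratic_neg (ha : 0 < a) {x : ℝ}
    (hx : a * (x * x) + b * x + c < 0) : 0 < discrim a b c :=
  (sq_nonneg _).trans_lt (sq_add_lt_discrim_of_quadratic_neg ha hx)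

theorem quadratic_neg_between_roots (ha : 0 < a) {x : ℝ}
    (hx : a * (x * x) + b * x + c < 0) :
    (-b - √(discrim a b c)) / (2 * a) < x ∧ x < (-b + √(discrim a b c)) / (2 * a) := by
  have hsq := sq_add_lt_discrim_of_quadratic_neg ha hx
  have hlt : 2 * a * x + b < √(discrim a b c) := Real.lt_sqrt_of_sq_lt hsq
  have hgt : -(2 * a * x + b) < √(discrim a b c) := Real.lt_sqrt_of_sq_lt (by rwa [neg_sq])
  have h2a : 0 < 2 * a := by positivity
  constructor
  · rw [div_lt_iff₀ h2a]; linarith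
  · rw [lt_div_iff₀ h2a]; linarith

theorem quadratic_root_add_root (ha : a ≠ 0) (d : ℝ) :
    (-b + d) / (2 * a) + (-b - d) / (2 * a) = -b / a := by
  field_simp; ring

theorem quadratic_larger_root_neg (ha : 0 < a) (hb : 0 < b) (hc : 0 < c) :
    (-b + √(discrim a b c)) / (2 * a) < 0 := by
  have hsqrt : √(discrim a b c) < b := by
    rw [Real.sqrt_lt' hb, discrim]
    nlinarith [mul_pos ha hc]
  exact div_neg_of_neg_of_pos (by linarith) (by positivity)

end Quadratic

theorem one_le_max_self_inv {ε : ℝ} (hε : 0 < ε) : 1 ≤ max ε ε⁻¹ := by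
  rcases le_total ε 1 with h | h
  · exact le_max_of_le_right ((one_le_inv₀ hε).mpr h)
  · exact le_max_of_le_left h

theorem max_self_inv_lt_div_of_add_eq {ε μ ν : ℝ} (hε : 0 < ε) (hν : ν < 0) (hν_one : -1 < ν)
    (hν_inv : -ε⁻¹ < ν) (hμ : μ = -(1 + ε⁻¹) - ν) : max ε ε⁻¹ < μ / ν := by
  rw [max_lt_iff, lt_div_iff_of_neg hν, lt_div_iff_of_neg hν]
  have h_self : ε * ν - μ = (1 + ε) * (ν + ε⁻¹) := by rw [hμ]; field_simp; ring
  have h_inv : ε⁻¹ * ν - μ = (1 + ε⁻¹) * (ν + 1) := by rw [hμ]; ring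
  constructor
  · linarith [mul_pos (by linarith : 0 < 1 + ε) (by linarith : 0 < ν + ε⁻¹)]
  · linarith [mul_pos (by positivity : 0 < 1 + ε⁻¹) (by linarith : 0 < ν + 1)]

/-- For `ε > 0` and `0 < η < 1`, setting
`λ₊ = (−(ε+1) + √((ε+1)² − 4εη))/(2ε)` and `λ₋ = (−(ε+1) − √((ε+1)² − 4εη))/(2ε)`
(the slow and fast eigenvalues of the dimensionless Michaelis–Menten planar
reduction), we have `(ε+1)² − 4εη > 0`, the strict inequalities
`λ₋ < −1 < −η < λ₊ < 0`, and `κ = λ₋/λ₊ > max(ε, ε⁻¹) ≥ 1`. -/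
theorem stmt19 (ε η : ℝ) (hε : 0 < ε) (hη0 : 0 < η) (hη1 : η < 1)
    (lamP lamM : ℝ)
    (hP : lamP = (-(ε + 1) + Real.sqrt ((ε + 1) ^ 2 - 4 * ε * η)) / (2 * ε))
    (hM : lamM = (-(ε + 1) - Real.sqrt ((ε + 1) ^ 2 - 4 * ε * η)) / (2 * ε)) :
    0 < (ε + 1) ^ 2 - 4 * ε * η ∧
    lamM < -1 ∧ -1 < -η ∧ -η < lamP ∧ lamP < 0 ∧
    max ε ε⁻¹ < lamM / lamP ∧ 1 ≤ max ε ε⁻¹ := by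
  have hdisc : (ε + 1) ^ 2 - 4 * ε * η = discrim ε (ε + 1) η := rfl
  rw [hdisc] at hP hM ⊢
  have hp_neg_one : ε * (-1 * -1) + (ε + 1) * -1 + η < 0 := by linarith
  have hp_neg_inv : ε * (-ε⁻¹ * -ε⁻¹) + (ε + 1) * -ε⁻¹ + η < 0 := by
    have h : ε * (-ε⁻¹ * -ε⁻¹) + (ε + 1) * -ε⁻¹ + η = η - 1 := by field_simp; ring
    linarith
  have hp_neg_eta : ε * (-η * -η) + (ε + 1) * -η + η < 0 := by
    have h : ε * (-η * -η) + (ε + 1) * -η + η = ε * η * (η - 1) := by ring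
    rw [h]; exact mul_neg_of_pos_of_neg (mul_pos hε hη0) (by linarith)
  obtain ⟨hM_lt, -⟩ := quadratic_neg_between_roots hε hp_neg_one
  obtain ⟨-, hP_gt_inv⟩ := quadratic_neg_between_roots hε hp_neg_inv
  obtain ⟨-, hP_gt_eta⟩ := quadratic_neg_between_roots hε hp_neg_eta
  have hP_neg := quadratic_larger_root_neg hε (by linarith : 0 < ε + 1) hη0
  have hsum := quadratic_root_add_root hε.ne' (b := ε + 1) (√(discrim ε (ε + 1) η))
  simp only [← hP, ← hM] at hM_lt hP_gt_inv hP_gt_eta hP_neg hsum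
  have hM_eq : lamM = -(1 + ε⁻¹) - lamP := by
    have h : -(ε + 1) / ε = -(1 + ε⁻¹) := by field_simp
    linarith
  refine ⟨discrim_pos_of_quadratic_neg hε hp_neg_one, hM_lt, by linarith, hP_gt_eta, hP_neg,
    max_self_inv_lt_div_of_add_eq hε hP_neg (by linarith) hP_gt_inv hM_eq, one_le_max_self_inv hε⟩
end
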